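/- arXiv:2211.14549 — 5 statements merged into one kernel-verified Lean document; each statement's English description precedes it below -/
import Mathlib

section
/- For a nonnegative integer n and any integer k, the poly-Bernoulli number B_n^{(k)} satisfies B_n^{(k)} = (-1)^n * sum_{m=0}^{n} (-1)^m * m! * S(n,m) / (m+1)^k, where S(n,m) denotes the Stirling number of the second kind. -/
/-!
Put `x = 1 - e^{-t}`, so that `Li_k(x) / x = ∑_m x^m / (m+1)^k`. The explicit formula
`(-1)^m m! S(n,m) = ∑_j (-1)^j C(m,j) j^n` turns the binomial expansion of `x^m` into the
Taylor series `x^m = ∑_n (-1)^(n+m) m! S(n,m) t^n / n!`. For `|t| < log 2` the resulting double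
series is absolutely summable, because its absolute values sum to `∑_m (e^|t| - 1)^m / (m+1)^k`,
so it may be summed over `m` first; for each `n` only `m ≤ n` contribute. Comparing Taylor
coefficients on `(0, min r (log 2))` then identifies `B n`.
-/

/-- Stirling numbers of the second kind. -/
def S2 : ℕ → ℕ → ℕ
  | 0, 0 => 1
  | 0, _ + 1 => 0
  | _ + 1, 0 => 0
  | n + 1, m + 1 => S2 n m + (m + 1) * S2 n (m + 1)

/-- The polylogarithm `Li_k(z) = ∑_{m ≥ 1} z^m / m^k` for integer index `k`. -/
noncomputable def LiInt (k : ℤ) (z : ℝ) : ℝ :=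
  ∑' m : ℕ, z ^ (m + 1) / ((m : ℝ) + 1) ^ k

open Finset Real Filter Topology Asymptotics
open scoped Nat

theorem S2_eq_stirlingSecond : S2 = Nat.stirlingSecond := by
  funext n m
  induction n generalizing m with
  | zero => cases m <;> rfl
  | succ n ih =>
    cases m with
    | zero => rfl
    | succ m => rw [S2, Nat.stirlingSecond_succ_succ, ih, ih, add_comm]

section AlternatingBinomialSum

variable {R : Type*} [CommRing R]

theorem alternating_sum_choose_succ (f : ℕ → R) (m : ℕ) :
    ∑ j ∈ range (m + 1 + 1), (-1) ^ j * ((m + 1).choose j : R) * f j =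
      ∑ j ∈ range (m + 1), (-1) ^ j * (m.choose j : R) * f j -
        ∑ j ∈ range (m + 1), (-1) ^ j * (m.choose j : R) * f (j + 1) := by
  have hshift : ∑ j ∈ range (m + 1), (-1) ^ j * (m.choose j : R) * f j =
      ∑ j ∈ range (m + 1), (-1) ^ (j + 1) * (m.choose (j + 1) : R) * f (j + 1) + f 0 := by
    rw [sum_range_succ', sum_range_succ _ m]
    simp
  rw [sum_range_succ', hshift]
  simp only [Nat.choose_succ_succ', pow_succ]
  push_cast
  simp only [mul_add, add_mul, sum_add_distrib, Nat.choose_zero_right]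
  simp only [mul_neg_one, neg_mul, sum_neg_distrib]
  ring

theorem alternating_sum_choose_succ_mul (g : ℕ → R) (m : ℕ) :
    ∑ j ∈ range (m + 1 + 1), (-1) ^ j * ((m + 1).choose j : R) * (j * g j) =
      -(m + 1) * ∑ j ∈ range (m + 1), (-1) ^ j * (m.choose j : R) * g (j + 1) := by
  rw [sum_range_succ', mul_sum]
  simp only [Nat.cast_zero, zero_mul, mul_zero, add_zero]
  refine sum_congr rfl fun j _ => ?_
  have h := congrArg (Nat.cast : ℕ → R) (Nat.add_one_mul_choose_eq m j)
  push_cast at h ⊢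
  linear_combination (-1) ^ j * g (j + 1) * h

theorem alternating_sum_choose_mul_pow (n m : ℕ) :
    ∑ j ∈ range (m + 1), (-1) ^ j * (m.choose j : R) * (j : R) ^ n =
      (-1) ^ m * m ! * Nat.stirlingSecond n m := by
  induction n generalizing m with
  | zero =>
    cases m with
    | zero => simp
    | succ m => simpa using alternating_sum_choose_succ (fun _ => (1 : R)) m
  | succ n ih =>
    cases m with
    | zero => simp
    | succ m =>
      have hpascal := alternating_sum_choose_succ (fun j => (j : R) ^ n) m
      have habsorb := alternating_sum_choose_succ_mul (fun j => (j : R) ^ n) m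
      simp only [pow_succ' _ n]
      rw [habsorb, Nat.stirlingSecond_succ_succ, Nat.factorial_succ]
      rw [ih, ih, Nat.factorial_succ] at hpascal
      push_cast at hpascal ⊢
      linear_combination (-(m + 1 : R)) * hpascal

end AlternatingBinomialSum

theorem hasSum_pow_div_factorial_exp (x : ℝ) : HasSum (fun n => x ^ n / n !) (exp x) :=
  exp_eq_exp_ℝ ▸ NormedSpace.expSeries_div_hasSum_exp x

theorem one_sub_exp_neg_pow_eq_sum (m : ℕ) (t : ℝ) :
    (1 - exp (-t)) ^ m =
      ∑ j ∈ range (m + 1), (-1) ^ j * (m.choose j : ℝ) * exp (-(j * t)) := by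
  rw [sub_eq_neg_add, add_pow]
  refine sum_congr rfl fun j _ => ?_
  rw [neg_pow, ← exp_nat_mul, one_pow, mul_one]
  ring_nf

theorem hasSum_one_sub_exp_neg_pow (m : ℕ) (t : ℝ) :
    HasSum (fun n => (-1) ^ (n + m) * m ! * Nat.stirlingSecond n m * t ^ n / n !)
      ((1 - exp (-t)) ^ m) := by
  rw [one_sub_exp_neg_pow_eq_sum]
  refine (hasSum_sum fun (j : ℕ) _ => (hasSum_pow_div_factorial_exp (-((j : ℝ) * t))).mul_left
    ((-1) ^ j * (m.choose j : ℝ))).congr_fun fun n => ?_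
  calc (-1) ^ (n + m) * m ! * Nat.stirlingSecond n m * t ^ n / n !
      = (∑ j ∈ range (m + 1), (-1) ^ j * (m.choose j : ℝ) * (j : ℝ) ^ n) *
          ((-1) ^ n * t ^ n / n !) := by
        rw [alternating_sum_choose_mul_pow]; ring
    _ = _ := by
        rw [sum_mul]
        exact sum_congr rfl fun j _ => by ring

theorem hasSum_exp_sub_one_pow (m : ℕ) (t : ℝ) :
    HasSum (fun n => m ! * Nat.stirlingSecond n m * t ^ n / n !) ((exp t - 1) ^ m) := by
  have h := (hasSum_one_sub_exp_neg_pow m (-t)).mul_left ((-1) ^ m)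
  rw [neg_neg, ← mul_pow, neg_one_mul, neg_sub] at h
  refine h.congr_fun fun n => ?_
  have hsign : ((-1 : ℝ)) ^ m * (-1) ^ (n + m) * (-1) ^ n = 1 := by
    rw [← pow_add, ← pow_add]
    exact Even.neg_one_pow ⟨n + m, by ring⟩
  rw [neg_pow t]
  linear_combination (-(m ! * Nat.stirlingSecond n m * t ^ n / n ! : ℝ)) * hsign

theorem summable_pow_div_add_one_zpow (k : ℤ) {y : ℝ} (hy : |y| < 1) :
    Summable fun m : ℕ => y ^ m / ((m : ℝ) + 1) ^ k := by
  have hpoly : (fun n : ℕ => (((n + 1) ^ k.natAbs : ℕ) : ℝ)) =O[atTop]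
      fun n => ((n ^ k.natAbs : ℕ) : ℝ) := by
    refine IsBigO.of_bound (2 ^ k.natAbs) ?_
    filter_upwards [eventually_ge_atTop 1] with n hn
    rw [Real.norm_natCast, Real.norm_natCast]
    push_cast
    rw [← mul_pow]
    exact pow_le_pow_left₀ (by positivity) (by norm_cast; omega) _
  refine Summable.of_norm_bounded
    (summable_norm_mul_geometric_of_norm_lt_one (r := |y|) (by simpa using hy) hpoly) fun m => ?_
  calc ‖y ^ m / ((m : ℝ) + 1) ^ k‖ = |y| ^ m * ((m : ℝ) + 1) ^ (-k) := by
        rw [norm_div, norm_pow, Real.norm_eq_abs, Real.norm_of_nonneg (by positivity), zpow_neg,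
          div_eq_mul_inv]
    _ ≤ |y| ^ m * ((m : ℝ) + 1) ^ (k.natAbs : ℤ) := by
        gcongr
        · simp
        · rw [Int.natCast_natAbs]
          exact neg_le_abs k
    _ = ‖(((m + 1) ^ k.natAbs : ℕ) : ℝ) * |y| ^ m‖ := by
        rw [zpow_natCast, Real.norm_of_nonneg (by positivity)]
        push_cast
        ring

theorem Summable.hasSum_tsum_of_hasSum_fibers {α β γ : Type*} [AddCommMonoid α]
    [TopologicalSpace α] [ContinuousAdd α] [T3Space α] {f : β × γ → α} (hf : Summable f)
    {g : β → α} {h : γ → α} (hg : ∀ b, HasSum (fun c => f (b, c)) (g b))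
    (hh : ∀ c, HasSum (fun b => f (b, c)) (h c)) : HasSum h (∑' b, g b) := by
  rw [(hf.hasSum.prod_fiberwise hg).tsum_eq]
  exact ((Equiv.prodComm γ β).hasSum_iff.2 hf.hasSum).prod_fiberwise hh

theorem LiInt_div_self {x : ℝ} (hx : x ≠ 0) (k : ℤ) :
    LiInt k x / x = ∑' m : ℕ, x ^ m / ((m : ℝ) + 1) ^ k := by
  rw [LiInt, div_eq_iff hx, mul_comm, ← tsum_mul_left]
  exact tsum_congr fun m => by ring

theorem hasSum_explicit_div_factorial_mul_pow (k : ℤ) {t : ℝ} (ht : |t| < log 2) :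
    HasSum (fun n => (-1) ^ n * (∑ m ∈ range (n + 1),
        (-1) ^ m * m ! * Nat.stirlingSecond n m / ((m : ℝ) + 1) ^ k) / n ! * t ^ n)
      (∑' m : ℕ, (1 - exp (-t)) ^ m / ((m : ℝ) + 1) ^ k) := by
  set f : ℕ × ℕ → ℝ := fun p =>
    (-1) ^ (p.2 + p.1) * p.1 ! * Nat.stirlingSecond p.2 p.1 * t ^ p.2 / p.2 ! /
      ((p.1 : ℝ) + 1) ^ k
  have hrow (m : ℕ) : HasSum (fun n => f (m, n)) ((1 - exp (-t)) ^ m / ((m : ℝ) + 1) ^ k) :=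
    (hasSum_one_sub_exp_neg_pow m t).div_const _
  have hcol (n : ℕ) : HasSum (fun m => f (m, n)) ((-1) ^ n * (∑ m ∈ range (n + 1),
        (-1) ^ m * m ! * Nat.stirlingSecond n m / ((m : ℝ) + 1) ^ k) / n ! * t ^ n) := by
    have hsupp (m : ℕ) (hm : m ∉ range (n + 1)) : f (m, n) = 0 := by
      simp [f, Nat.stirlingSecond_eq_zero_of_lt (by simpa using hm : n < m)]
    convert hasSum_sum_of_ne_finset_zero (L := SummationFilter.unconditional ℕ) hsupp using 1
    simp only [f, mul_sum, sum_div, sum_mul]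
    exact sum_congr rfl fun m _ => by ring
  have hnorm (m : ℕ) :
      HasSum (fun n => ‖f (m, n)‖) ((exp |t| - 1) ^ m / ((m : ℝ) + 1) ^ k) := by
    refine ((hasSum_exp_sub_one_pow m |t|).div_const _).congr_fun fun n => ?_
    simp [f, abs_of_pos (by positivity : (0 : ℝ) < m + 1)]
  have hsummable : Summable f := by
    refine Summable.of_norm ((summable_prod_of_nonneg fun _ => norm_nonneg _).2
      ⟨fun m => (hnorm m).summable, ?_⟩)
    refine (summable_pow_div_add_one_zpow k ?_).congr fun m => (hnorm m).tsum_eq.symm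
    have hexp : exp |t| < 2 := by simpa [exp_log] using exp_lt_exp.2 ht
    rw [abs_of_nonneg (by linarith [one_le_exp (abs_nonneg t)])]
    linarith
  exact hsummable.hasSum_tsum_of_hasSum_fibers hrow hcol

theorem eq_zero_of_hasSum_mul_pow_zero_on_Ioo {a : ℕ → ℝ} {r : ℝ} (hr : 0 < r)
    (h : ∀ t ∈ Set.Ioo 0 r, HasSum (fun n => a n * t ^ n) 0) : a = 0 := by
  set p := FormalMultilinearSeries.ofScalars ℝ a
  have hrad : ((r / 2).toNNReal : ENNReal) ≤ p.radius := by
    have hs := (h (r / 2) ⟨by positivity, by linarith⟩).summable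
    obtain ⟨C, hC⟩ := hs.tendsto_atTop_zero.norm.bddAbove_range
    refine p.le_radius_of_bound C fun n => ?_
    simpa [p, FormalMultilinearSeries.ofScalars_norm, abs_of_pos hr,
      Real.coe_toNNReal _ (by positivity : 0 ≤ r / 2)] using hC (Set.mem_range_self n)
  have hp : HasFPowerSeriesAt p.sum p 0 :=
    (p.hasFPowerSeriesOnBall (lt_of_lt_of_le (by simpa using hr) hrad)).hasFPowerSeriesAt
  have hzero : ∃ᶠ t in 𝓝[≠] (0 : ℝ), p.sum t = 0 := by
    have hright : ∀ᶠ t in 𝓝[>] (0 : ℝ), p.sum t = 0 := by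
      filter_upwards [Ioo_mem_nhdsGT hr] with t ht
      rw [← FormalMultilinearSeries.ofScalarsSum, FormalMultilinearSeries.ofScalars_sum_eq]
      simpa using (h t ht).tsum_eq
    exact hright.frequently.filter_mono (nhdsWithin_mono _ fun t ht => ne_of_gt ht)
  simpa [p] using
    hp.eq_zero_of_eventually (hp.analyticAt.frequently_zero_iff_eventually_zero.1 hzero)

theorem eq_of_hasSum_mul_pow_on_Ioo {a b : ℕ → ℝ} {r : ℝ} (hr : 0 < r) {f : ℝ → ℝ}
    (ha : ∀ t ∈ Set.Ioo 0 r, HasSum (fun n => a n * t ^ n) (f t))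
    (hb : ∀ t ∈ Set.Ioo 0 r, HasSum (fun n => b n * t ^ n) (f t)) : a = b :=
  sub_eq_zero.1 <| eq_zero_of_hasSum_mul_pow_zero_on_Ioo hr fun t ht => by
    simpa [sub_mul] using (ha t ht).sub (hb t ht)

/-- Kaneko's explicit formula for poly-Bernoulli numbers in terms of Stirling
numbers of the second kind. -/
theorem polyBernoulli_explicit (k : ℤ) (B : ℕ → ℝ) (r : ℝ) (hr : 0 < r)
    (hB : ∀ t : ℝ, 0 < t → t < r →
      HasSum (fun n : ℕ => B n * t ^ n / (Nat.factorial n : ℝ))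
        (LiInt k (1 - Real.exp (-t)) / (1 - Real.exp (-t))))
    (n : ℕ) :
    B n = (-1 : ℝ) ^ n * ∑ m ∈ Finset.range (n + 1),
      (-1 : ℝ) ^ m * (Nat.factorial m : ℝ) * (S2 n m : ℝ) / ((m : ℝ) + 1) ^ k := by
  have hcoeff : (fun n => B n / n !) = fun n => (-1) ^ n * (∑ m ∈ range (n + 1),
      (-1) ^ m * m ! * Nat.stirlingSecond n m / ((m : ℝ) + 1) ^ k) / n ! := by
    refine eq_of_hasSum_mul_pow_on_Ioo (lt_min hr (log_pos one_lt_two))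
      (f := fun t => LiInt k (1 - exp (-t)) / (1 - exp (-t))) (fun t ht => ?_) (fun t ht => ?_)
    · simpa only [div_mul_eq_mul_div] using hB t ht.1 (ht.2.trans_le (min_le_left _ _))
    · have hx : 1 - exp (-t) ≠ 0 := (sub_pos.2 (exp_lt_one_iff.2 (neg_lt_zero.2 ht.1))).ne'
      rw [LiInt_div_self hx]
      exact hasSum_explicit_div_factorial_mul_pow k
        ((abs_of_pos ht.1).trans_lt (ht.2.trans_le (min_le_right _ _)))
  rw [S2_eq_stirlingSecond]
  exact (div_left_inj' (by positivity)).1 (congrFun hcoeff n)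
end

section
/- Let k, N be positive integers and p a prime. If n, m are integers with n, m >= N and n ≡ m (mod p^{N-1}(p-1)), then B_n^{(-k)} ≡ B_m^{(-k)} (mod p^N). -/
/-- Poly-Bernoulli number with negative upper index: `B_n^{(-k)}`. -/
def Bneg (n k : ℕ) : ℤ :=
  (-1 : ℤ) ^ n * ∑ m ∈ Finset.range (n + 1),
    (-1 : ℤ) ^ m * (Nat.factorial m : ℤ) * (S2 n m : ℤ) * ((m : ℤ) + 1) ^ k

open Finset Nat

theorem S2_eq_stirlingSecond_s2 (n j : ℕ) : S2 n j = stirlingSecond n j := by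
  induction n generalizing j with
  | zero => cases j <;> rfl
  | succ n ih =>
    cases j with
    | zero => rfl
    | succ j => rw [S2, stirlingSecond_succ_succ, ih, ih, add_comm]

theorem natCast_mul_choose_succ (i j : ℕ) :
    (i : ℤ) * (j + 1).choose i = (j + 1) * ((j + 1).choose i - j.choose i) := by
  cases i with
  | zero => simp
  | succ i =>
    have h := congrArg (Nat.cast (R := ℤ)) (Nat.add_one_mul_choose_eq j i)
    rw [Nat.choose_succ_succ] at h ⊢
    push_cast at h ⊢
    linear_combination -h

theorem alternating_sum_choose_mul_pow_succ (n j : ℕ) :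
    ∑ i ∈ range (j + 2), (-1 : ℤ) ^ i * ((j + 1).choose i : ℤ) * (i : ℤ) ^ (n + 1) =
      (j + 1) * (∑ i ∈ range (j + 2), (-1 : ℤ) ^ i * ((j + 1).choose i : ℤ) * (i : ℤ) ^ n -
        ∑ i ∈ range (j + 1), (-1 : ℤ) ^ i * (j.choose i : ℤ) * (i : ℤ) ^ n) := by
  have hext : ∑ i ∈ range (j + 1), (-1 : ℤ) ^ i * (j.choose i : ℤ) * (i : ℤ) ^ n =
      ∑ i ∈ range (j + 2), (-1 : ℤ) ^ i * (j.choose i : ℤ) * (i : ℤ) ^ n := by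
    simp [sum_range_succ _ (j + 1)]
  rw [hext, ← sum_sub_distrib, mul_sum]
  refine sum_congr rfl fun i _ => ?_
  linear_combination (-1 : ℤ) ^ i * (i : ℤ) ^ n * natCast_mul_choose_succ i j

theorem neg_one_pow_mul_factorial_mul_stirlingSecond (n j : ℕ) :
    (-1 : ℤ) ^ j * j ! * stirlingSecond n j =
      ∑ i ∈ range (j + 1), (-1 : ℤ) ^ i * j.choose i * (i : ℤ) ^ n := by
  induction n generalizing j with
  | zero =>
    cases j with
    | zero => simp
    | succ j => simp [Int.alternating_sum_range_choose_of_ne]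
  | succ n ih =>
    cases j with
    | zero => simp
    | succ j =>
      rw [alternating_sum_choose_mul_pow_succ, ← ih, ← ih, stirlingSecond_succ_succ,
        factorial_succ]
      push_cast
      ring

theorem Bneg_eq_sum_pow (n k M : ℕ) (hnM : n ≤ M) :
    Bneg n k = ∑ j ∈ range (M + 1), ∑ i ∈ range (j + 1),
      (-1 : ℤ) ^ i * j.choose i * ((j : ℤ) + 1) ^ k * (-(i : ℤ)) ^ n := by
  have hsupp : ∀ j ∈ range (M + 1), j ∉ range (n + 1) →
      (-1 : ℤ) ^ j * j ! * stirlingSecond n j * ((j : ℤ) + 1) ^ k = 0 := by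
    intro j _ hj
    rw [stirlingSecond_eq_zero_of_lt (by simpa using hj)]
    simp
  simp only [Bneg, S2_eq_stirlingSecond_s2]
  rw [sum_subset (range_subset_range.mpr (by omega)) hsupp, mul_sum]
  refine sum_congr rfl fun j _ => ?_
  rw [neg_one_pow_mul_factorial_mul_stirlingSecond, sum_mul, mul_sum]
  refine sum_congr rfl fun i _ => ?_
  rw [neg_pow]
  ring

theorem ZMod.pow_eq_pow_of_le_of_modEq_totient {p : ℕ} (hp : p.Prime) {N n m : ℕ}
    (hn : N ≤ n) (hm : N ≤ m) (hnm : n ≡ m [MOD φ (p ^ N)]) (x : ZMod (p ^ N)) : x ^ n = x ^ m := by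
  have : NeZero p := ⟨hp.ne_zero⟩
  by_cases hx : IsUnit x
  · obtain ⟨u, rfl⟩ := hx
    have hord : orderOf u ∣ φ (p ^ N) := orderOf_dvd_of_pow_eq_one (ZMod.pow_totient u)
    rw [← Units.val_pow_eq_pow_val, ← Units.val_pow_eq_pow_val,
      pow_eq_pow_iff_modEq.mpr (hnm.of_dvd hord)]
  · have hpx : p ∣ x.val := by
      by_contra hpx
      rw [← ZMod.natCast_zmod_val x, ZMod.isUnit_iff_coprime] at hx
      exact hx ((hp.coprime_iff_not_dvd.mpr hpx).symm.pow_right N)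
    have hvanish : ∀ l, N ≤ l → x ^ l = 0 := by
      intro l hl
      rw [← ZMod.natCast_zmod_val x, ← Nat.cast_pow, ZMod.natCast_eq_zero_iff]
      exact (pow_dvd_pow p hl).trans (pow_dvd_pow_of_dvd hpx l)
    rw [hvanish n hn, hvanish m hm]

theorem polyBernoulli_neg_periodicity_general (k N : ℕ) (hN : 0 < N)
    (p : ℕ) (hp : p.Prime) (n m : ℕ) (hn : N ≤ n) (hm : N ≤ m)
    (hnm : n ≡ m [MOD p ^ (N - 1) * (p - 1)]) :
    Bneg n k ≡ Bneg m k [ZMOD (p : ℤ) ^ N] := by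
  rw [← Nat.totient_prime_pow hp hN] at hnm
  have hpow (x : ZMod (p ^ N)) : x ^ n = x ^ m :=
    ZMod.pow_eq_pow_of_le_of_modEq_totient hp hn hm hnm x
  rw [← Nat.cast_pow, ← ZMod.intCast_eq_intCast_iff,
    Bneg_eq_sum_pow n k (max n m) (le_max_left _ _),
    Bneg_eq_sum_pow m k (max n m) (le_max_right _ _)]
  push_cast
  simp only [hpow]

/-- Periodicity of poly-Bernoulli numbers with negative upper index. -/
theorem polyBernoulli_neg_periodicity (k N : ℕ) (hk : 0 < k) (hN : 0 < N)
    (p : ℕ) (hp : p.Prime) (n m : ℕ) (hn : N ≤ n) (hm : N ≤ m)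
    (hnm : n ≡ m [MOD p ^ (N - 1) * (p - 1)]) :
    Bneg n k ≡ Bneg m k [ZMOD (p : ℤ) ^ N] :=
  polyBernoulli_neg_periodicity_general k N hN p hp n m hn hm hnm
end

section
/- Let k1, k2, N be positive integers and p a prime. If n1, n2, m2 >= N with n2 ≡ m2 (mod p^{N-1}(p-1)), then B_{n1,n2}^{(-k1,-k2)} ≡ B_{n1,m2}^{(-k1,-k2)} (mod p^N). -/
/-- Double-indexed poly-Bernoulli number with negative upper indices
`B_{n1,n2}^{(-k1,-k2)}`, via the dual explicit formula
`B_{n1,n2}^{(-k1,-k2)} = B_{k1,k2}^{(-n1,-n2)}`. -/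
def B2negD (n1 n2 k1 k2 : ℕ) : ℤ :=
  ∑ l1 ∈ Finset.range (k1 + k2 + 1), ∑ l2 ∈ Finset.range (k1 + k2 + 1),
    (-1 : ℤ) ^ (l1 + l2 + k1 + k2) * (Nat.factorial l1 : ℤ) * (Nat.factorial l2 : ℤ) *
      ((l1 : ℤ) + 1) ^ n1 * ((l1 : ℤ) + (l2 : ℤ) + 2) ^ n2 *
      ∑ h ∈ Finset.range (k1 + k2 + 1),
        (S2 h l1 : ℤ) * (S2 (k1 + k2 - h) l2 : ℤ) *
          (if k1 ≤ h then (Nat.choose k2 (h - k1) : ℤ) else 0)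

/-!
The second index `n2` enters the explicit formula for `B2negD` only through the powers
`(l1 + l2 + 2) ^ n2`, so it suffices that `a ^ n2 ≡ a ^ m2 (mod p ^ N)` for every integer `a`.
For `a` prime to `p` this is Euler's theorem, since `φ (p ^ N) = p ^ (N - 1) * (p - 1)`;
for `p ∣ a` both powers vanish modulo `p ^ N` because `n2, m2 ≥ N`.
-/

open Nat

theorem Int.pow_modEq_pow_of_isCoprime {a : ℤ} {M n m : ℕ} (ha : IsCoprime (M : ℤ) a)
    (h : n ≡ m [MOD φ M]) : a ^ n ≡ a ^ m [ZMOD M] := by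
  obtain ⟨u, hu⟩ := (ZMod.coe_int_isUnit_iff_isCoprime a M).mpr ha
  have hnm : u ^ n = u ^ m :=
    pow_eq_pow_iff_modEq.mpr (h.of_dvd (orderOf_dvd_of_pow_eq_one (ZMod.pow_totient u)))
  rw [← ZMod.intCast_eq_intCast_iff]
  push_cast
  rw [← hu, ← Units.val_pow_eq_pow_val, ← Units.val_pow_eq_pow_val, hnm]

theorem Int.pow_modEq_pow_of_modEq_totient_prime_pow (a : ℤ) {p N n m : ℕ} (hp : p.Prime)
    (hn : N ≤ n) (hm : N ≤ m) (h : n ≡ m [MOD φ (p ^ N)]) : a ^ n ≡ a ^ m [ZMOD p ^ N] := by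
  by_cases hpa : (p : ℤ) ∣ a
  · have pow_zero_mod {k : ℕ} (hk : N ≤ k) : a ^ k ≡ 0 [ZMOD p ^ N] :=
      Int.modEq_zero_iff_dvd.mpr ((pow_dvd_pow_of_dvd hpa N).trans (pow_dvd_pow a hk))
    exact (pow_zero_mod hn).trans (pow_zero_mod hm).symm
  · have hcop : IsCoprime ((p ^ N : ℕ) : ℤ) a := by
      push_cast
      exact ((Nat.prime_iff_prime_int.mp hp).coprime_iff_not_dvd.mpr hpa).pow_left
    exact_mod_cast Int.pow_modEq_pow_of_isCoprime hcop h

theorem B2negD_modEq_of_pow_modEq {M : ℤ} {n2 m2 : ℕ} (hpow : ∀ a : ℤ, a ^ n2 ≡ a ^ m2 [ZMOD M])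
    (n1 k1 k2 : ℕ) : B2negD n1 n2 k1 k2 ≡ B2negD n1 m2 k1 k2 [ZMOD M] :=
  Int.ModEq.sum fun _ _ => Int.ModEq.sum fun _ _ => ((Int.ModEq.refl _).mul (hpow _)).mul_right _

theorem doublePolyBernoulli_periodicity_snd_general (k1 k2 N : ℕ)
    (hN : 0 < N) (p : ℕ) (hp : p.Prime)
    (n1 n2 m2 : ℕ) (hn2 : N ≤ n2) (hm2 : N ≤ m2)
    (h : n2 ≡ m2 [MOD p ^ (N - 1) * (p - 1)]) :
    B2negD n1 n2 k1 k2 ≡ B2negD n1 m2 k1 k2 [ZMOD (p : ℤ) ^ N] := by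
  rw [← Nat.totient_prime_pow hp hN] at h
  exact B2negD_modEq_of_pow_modEq
    (fun a => a.pow_modEq_pow_of_modEq_totient_prime_pow hp hn2 hm2 h) n1 k1 k2

/-- Periodicity of double-indexed poly-Bernoulli numbers in the second index. -/
theorem doublePolyBernoulli_periodicity_snd (k1 k2 N : ℕ)
    (hk1 : 0 < k1) (hk2 : 0 < k2) (hN : 0 < N) (p : ℕ) (hp : p.Prime)
    (n1 n2 m2 : ℕ) (hn1 : N ≤ n1) (hn2 : N ≤ n2) (hm2 : N ≤ m2)
    (h : n2 ≡ m2 [MOD p ^ (N - 1) * (p - 1)]) :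
    B2negD n1 n2 k1 k2 ≡ B2negD n1 m2 k1 k2 [ZMOD (p : ℤ) ^ N] :=
  doublePolyBernoulli_periodicity_snd_general k1 k2 N hN p hp n1 n2 m2 hn2 hm2 h
end

section
/- Let k1, k2, N be positive integers and p a prime. For integers n1, n2 >= N, sum_{i=0}^{φ(p^N)-1} B_{n1+i, n2}^{(-k1,-k2)} ≡ 0 (mod p^N). -/
/-!
Write the summand of `B2negD (n1 + i) n2 k1 k2` indexed by `(l1, l2)` as a coefficient
independent of `i` times `l1! (l1 + 1)^(n1 + i)`. For `l1 = 0` the coefficient vanishes, since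
`S(h, 0) = 0` for `h > 0` while `h = 0 < k1` is cut off by the binomial factor. For `l1 ≥ 1` the
geometric sum telescopes:
`l1! ∑_{i < φ(p^N)} (l1 + 1)^(n1 + i) = (l1 - 1)! (l1 + 1)^n1 ((l1 + 1)^φ(p^N) - 1)`,
and `p^N` divides `a^n (a^φ(p^N) - 1)` for every `a` and `n ≥ N`: by Euler's theorem if `p ∤ a`,
because `p^N ∣ a^n` otherwise.
-/

open Finset Nat

theorem prime_pow_dvd_pow_mul_pow_totient_sub_one {p : ℕ} (hp : p.Prime) (a : ℕ) {N n : ℕ}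
    (hn : N ≤ n) : (p : ℤ) ^ N ∣ (a : ℤ) ^ n * ((a : ℤ) ^ (p ^ N).totient - 1) := by
  by_cases hpa : p ∣ a
  · have : p ^ N ∣ a ^ n := (pow_dvd_pow_of_dvd hpa N).trans (pow_dvd_pow a hn)
    exact dvd_mul_of_dvd_left (by exact_mod_cast this) _
  · have hcop : a.Coprime (p ^ N) := ((hp.coprime_iff_not_dvd.mpr hpa).pow_left N).symm
    have heuler := (Int.natCast_modEq_iff.mpr (Nat.ModEq.pow_totient hcop)).symm.dvd
    push_cast at heuler
    exact dvd_mul_of_dvd_right heuler _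

theorem factorial_mul_sum_pow_succ_eq {l : ℕ} (hl : 0 < l) (n m : ℕ) :
    (l ! : ℤ) * ∑ i ∈ range m, ((l : ℤ) + 1) ^ (n + i)
      = ((l - 1)! : ℤ) * (((l : ℤ) + 1) ^ n * (((l : ℤ) + 1) ^ m - 1)) := by
  rw [← Nat.mul_factorial_pred hl.ne', ← geom_sum_mul]
  simp only [pow_add, ← mul_sum]
  push_cast
  ring

theorem prime_pow_dvd_factorial_mul_sum_pow {p : ℕ} (hp : p.Prime) {l : ℕ} (hl : 0 < l)
    {N n : ℕ} (hn : N ≤ n) :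
    (p : ℤ) ^ N ∣ (l ! : ℤ) * ∑ i ∈ range (p ^ N).totient, ((l : ℤ) + 1) ^ (n + i) := by
  have key := prime_pow_dvd_pow_mul_pow_totient_sub_one hp (l + 1) hn
  push_cast at key
  rw [factorial_mul_sum_pow_succ_eq hl]
  exact dvd_mul_of_dvd_right key _

def B2negCoeff (n2 k1 k2 l1 l2 : ℕ) : ℤ :=
  (-1 : ℤ) ^ (l1 + l2 + k1 + k2) * (l2 ! : ℤ) * ((l1 : ℤ) + (l2 : ℤ) + 2) ^ n2 *
    ∑ h ∈ range (k1 + k2 + 1),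
      (S2 h l1 : ℤ) * (S2 (k1 + k2 - h) l2 : ℤ) *
        (if k1 ≤ h then (Nat.choose k2 (h - k1) : ℤ) else 0)

theorem B2negD_eq_sum_coeff (n1 n2 k1 k2 : ℕ) :
    B2negD n1 n2 k1 k2 = ∑ l1 ∈ range (k1 + k2 + 1), ∑ l2 ∈ range (k1 + k2 + 1),
      B2negCoeff n2 k1 k2 l1 l2 * ((l1 ! : ℤ) * ((l1 : ℤ) + 1) ^ n1) := by
  unfold B2negD B2negCoeff
  refine sum_congr rfl fun l1 _ => sum_congr rfl fun l2 _ => ?_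
  ring

theorem S2_succ_zero (n : ℕ) : S2 (n + 1) 0 = 0 := rfl

theorem B2negCoeff_zero_left {k1 : ℕ} (hk1 : 0 < k1) (n2 k2 l2 : ℕ) :
    B2negCoeff n2 k1 k2 0 l2 = 0 := by
  unfold B2negCoeff
  refine mul_eq_zero_of_right _ (sum_eq_zero fun h _ => ?_)
  rcases h with _ | h
  · rw [if_neg (by omega), mul_zero]
  · rw [S2_succ_zero, Nat.cast_zero, zero_mul, zero_mul]

theorem doublePolyBernoulli_sum_vanish_fst_general (k1 k2 N : ℕ)
    (hk1 : 0 < k1) (p : ℕ) (hp : p.Prime)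
    (n1 n2 : ℕ) (hn1 : N ≤ n1) :
    (∑ i ∈ Finset.range (Nat.totient (p ^ N)), B2negD (n1 + i) n2 k1 k2) ≡ 0
      [ZMOD (p : ℤ) ^ N] := by
  rw [Int.modEq_zero_iff_dvd]
  simp_rw [B2negD_eq_sum_coeff]
  rw [sum_comm]
  refine dvd_sum fun l1 _ => ?_
  rw [sum_comm]
  refine dvd_sum fun l2 _ => ?_
  rw [← mul_sum, ← mul_sum]
  rcases Nat.eq_zero_or_pos l1 with rfl | hl1
  · rw [B2negCoeff_zero_left hk1, zero_mul]
    exact dvd_zero _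
  · exact dvd_mul_of_dvd_right (prime_pow_dvd_factorial_mul_sum_pow hp hl1 hn1) _

/-- Vanishing of totient-length sums of double-indexed poly-Bernoulli numbers
along the first index. -/
theorem doublePolyBernoulli_sum_vanish_fst (k1 k2 N : ℕ)
    (hk1 : 0 < k1) (hk2 : 0 < k2) (hN : 0 < N) (p : ℕ) (hp : p.Prime)
    (n1 n2 : ℕ) (hn1 : N ≤ n1) (hn2 : N ≤ n2) :
    (∑ i ∈ Finset.range (Nat.totient (p ^ N)), B2negD (n1 + i) n2 k1 k2) ≡ 0
      [ZMOD (p : ℤ) ^ N] :=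
  doublePolyBernoulli_sum_vanish_fst_general k1 k2 N hk1 p hp n1 n2 hn1
end

section
/- Let k1, k2 be positive integers and M = p1^{e1} ... pm^{em} a factorization of a positive integer M into pairwise coprime prime powers. For any integers n1, n2 >= max(e1,...,em), sum_{i=0}^{φ(M)-1} B_{n1+i, n2}^{(-k1,-k2)} ≡ 0 (mod M). -/
/-!
Writing `B_{n1+i,n2}` as a double sum over `ℓ1, ℓ2`, the only dependence on `i` is the factor
`(ℓ1+1)^{n1+i}`, so the sum over `i < φ(M)` turns it into `(ℓ1+1)^{n1} ∑_{i<φ(M)} (ℓ1+1)^i`.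
For `ℓ1 = 0` the Stirling factor `S(h,0)` kills the term (as `k1 > 0` forces `h ≥ 1`).
For `ℓ1 ≥ 1` the term also carries `ℓ1!`, hence the factor `ℓ1`, and
`ℓ1 (ℓ1+1)^{n1} ∑_{i<φ(M)} (ℓ1+1)^i = (ℓ1+1)^{n1} ((ℓ1+1)^{φ(M)} - 1)`.
Each `p^e ∥ M` divides this: if `p ∣ ℓ1+1` through `(ℓ1+1)^{n1}` since `n1 ≥ e`,
otherwise through Euler's theorem, as `φ(p^e) ∣ φ(M)`.
-/

open Finset Nat

theorem prime_pow_dvd_pow_mul_pow_totient_sub_one_s10 {p e n M : ℕ} (hp : p.Prime) (hen : e ≤ n)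
    (hdvd : p ^ e ∣ M) (x : ℕ) :
    ((p ^ e : ℕ) : ℤ) ∣ (x : ℤ) ^ n * ((x : ℤ) ^ M.totient - 1) := by
  by_cases hpx : p ∣ x
  · have : p ^ e ∣ x ^ n := (pow_dvd_pow_of_dvd hpx e).trans (pow_dvd_pow x hen)
    exact (Int.natCast_dvd_natCast.mpr this).trans (by push_cast; exact dvd_mul_right _ _)
  · have hcop : x.Coprime (p ^ e) :=
      Nat.Coprime.pow_right e (hp.coprime_iff_not_dvd.mpr hpx).symm
    obtain ⟨t, ht⟩ := Nat.totient_dvd_of_dvd hdvd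
    have heuler : x ^ M.totient ≡ 1 [MOD p ^ e] := by
      simpa [ht, pow_mul] using (Nat.ModEq.pow_totient hcop).pow t
    have := Nat.modEq_iff_dvd.mp heuler.symm
    push_cast at this ⊢
    exact dvd_mul_of_dvd_right this _

theorem dvd_pow_mul_pow_totient_sub_one {m : ℕ} {p e : Fin m → ℕ} (hp : ∀ i, (p i).Prime)
    (hpinj : Function.Injective p) {M n : ℕ} (hM : M = ∏ i, p i ^ e i) (hn : ∀ i, e i ≤ n)
    (x : ℕ) : (M : ℤ) ∣ (x : ℤ) ^ n * ((x : ℤ) ^ M.totient - 1) := by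
  have hM' : (M : ℤ) = ∏ i, ((p i ^ e i : ℕ) : ℤ) := by rw [hM]; push_cast; rfl
  rw [hM']
  refine prod_dvd_of_coprime (fun i _ j _ hij => ?_) fun i _ =>
    prime_pow_dvd_pow_mul_pow_totient_sub_one_s10 (hp i) (hn i)
      (hM ▸ dvd_prod_of_mem _ (mem_univ i)) x
  exact Nat.Coprime.isCoprime (Nat.Coprime.pow _ _
    ((Nat.coprime_primes (hp i) (hp j)).mpr (hpinj.ne hij)))

theorem dvd_factorial_mul_pow_mul_geom_sum {M : ℤ} {a n N : ℕ} (ha : 1 ≤ a)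
    (h : M ∣ ((a + 1 : ℕ) : ℤ) ^ n * (((a + 1 : ℕ) : ℤ) ^ N - 1)) :
    M ∣ (a ! : ℤ) * ((a : ℤ) + 1) ^ n * ∑ i ∈ range N, ((a : ℤ) + 1) ^ i := by
  obtain ⟨b, hb⟩ : (a : ℤ) ∣ a ! := Int.natCast_dvd_natCast.mpr (Nat.dvd_factorial ha le_rfl)
  have hgeom : (∑ i ∈ range N, ((a : ℤ) + 1) ^ i) * a = ((a : ℤ) + 1) ^ N - 1 := by
    simpa using geom_sum_mul ((a : ℤ) + 1) N
  push_cast at h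
  rw [← hgeom] at h
  rw [hb]
  exact (h.mul_left b).trans (dvd_of_eq (by ring))

def B2negDCoeff (n2 k1 k2 l1 l2 : ℕ) : ℤ :=
  (-1 : ℤ) ^ (l1 + l2 + k1 + k2) * (l2 ! : ℤ) * ((l1 : ℤ) + (l2 : ℤ) + 2) ^ n2 *
    ∑ h ∈ range (k1 + k2 + 1),
      (S2 h l1 : ℤ) * (S2 (k1 + k2 - h) l2 : ℤ) *
        (if k1 ≤ h then (Nat.choose k2 (h - k1) : ℤ) else 0)

theorem B2negD_eq_sum (n1 n2 k1 k2 : ℕ) :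
    B2negD n1 n2 k1 k2 = ∑ l1 ∈ range (k1 + k2 + 1), ∑ l2 ∈ range (k1 + k2 + 1),
      (l1 ! : ℤ) * ((l1 : ℤ) + 1) ^ n1 * B2negDCoeff n2 k1 k2 l1 l2 := by
  unfold B2negD B2negDCoeff
  refine sum_congr rfl fun l1 _ => sum_congr rfl fun l2 _ => ?_
  ring

theorem sum_range_B2negD (N n1 n2 k1 k2 : ℕ) :
    ∑ i ∈ range N, B2negD (n1 + i) n2 k1 k2 =
      ∑ l1 ∈ range (k1 + k2 + 1), ∑ l2 ∈ range (k1 + k2 + 1),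
        (l1 ! : ℤ) * ((l1 : ℤ) + 1) ^ n1 * (∑ i ∈ range N, ((l1 : ℤ) + 1) ^ i) *
          B2negDCoeff n2 k1 k2 l1 l2 := by
  simp only [B2negD_eq_sum, pow_add]
  rw [sum_comm]
  refine sum_congr rfl fun l1 _ => ?_
  rw [sum_comm]
  refine sum_congr rfl fun l2 _ => ?_
  rw [mul_sum, sum_mul]
  refine sum_congr rfl fun i _ => ?_
  ring

theorem B2negDCoeff_zero_left {k1 : ℕ} (hk1 : 0 < k1) (n2 k2 l2 : ℕ) :
    B2negDCoeff n2 k1 k2 0 l2 = 0 := by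
  refine mul_eq_zero_of_right _ (sum_eq_zero fun h _ => ?_)
  cases h with
  | zero => simp [Nat.ne_of_gt hk1]
  | succ h => simp [S2]

theorem doublePolyBernoulli_sum_vanish_general_general (k1 k2 : ℕ)
    (hk1 : 0 < k1) (m : ℕ) (p e : Fin m → ℕ)
    (hp : ∀ i, (p i).Prime) (hpinj : Function.Injective p)
    (M : ℕ) (hM : M = ∏ i, p i ^ e i)
    (n1 n2 : ℕ) (hn1 : ∀ i, e i ≤ n1) :
    (∑ i ∈ Finset.range (Nat.totient M), B2negD (n1 + i) n2 k1 k2) ≡ 0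
      [ZMOD (M : ℤ)] := by
  rw [Int.modEq_zero_iff_dvd, sum_range_B2negD]
  refine dvd_sum fun l1 _ => dvd_sum fun l2 _ => ?_
  rcases Nat.eq_zero_or_pos l1 with rfl | hl1
  · simp [B2negDCoeff_zero_left hk1]
  · exact (dvd_factorial_mul_pow_mul_geom_sum hl1
      (dvd_pow_mul_pow_totient_sub_one hp hpinj hM hn1 _)).mul_right _

/-- Vanishing of totient-length sums of double-indexed poly-Bernoulli numbers
modulo a general modulus `M = p1^{e1} ⋯ pm^{em}`. -/
theorem doublePolyBernoulli_sum_vanish_general (k1 k2 : ℕ)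
    (hk1 : 0 < k1) (hk2 : 0 < k2) (m : ℕ) (p e : Fin m → ℕ)
    (hp : ∀ i, (p i).Prime) (hpinj : Function.Injective p)
    (he : ∀ i, 0 < e i) (M : ℕ) (hM : M = ∏ i, p i ^ e i)
    (n1 n2 : ℕ) (hn1 : ∀ i, e i ≤ n1) (hn2 : ∀ i, e i ≤ n2) :
    (∑ i ∈ Finset.range (Nat.totient M), B2negD (n1 + i) n2 k1 k2) ≡ 0
      [ZMOD (M : ℤ)] :=
  doublePolyBernoulli_sum_vanish_general_general k1 k2 hk1 m p e hp hpinj M hM n1 n2 hn1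
end
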